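/- arXiv:2409.01570 — 2 statements merged into one kernel-verified Lean document; each statement's English description precedes it below -/
import Mathlib

section
/- Let K satisfy the kernel assumption and let δ > 0. Then for every x ∈ ℝ, 0 ≤ l_δ(x) − |x| ≤ δ · ∫_ℝ |u| K(u) du. -/
open MeasureTheory
open scoped BigOperators

/-- The kernel assumption: `K` is a nonnegative, symmetric kernel integrating to one,
bounded, Lipschitz, positive at zero, and `x ↦ x * K x` is bounded, Lipschitz and
absolutely integrable. -/
structure IsGoodKernel (K : ℝ → ℝ) : Prop where
  nonneg : ∀ x, 0 ≤ K x
  symm : ∀ x, K x = K (-x)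
  integral_one : (∫ x, K x) = 1
  bounded : ∃ B, ∀ x, |K x| ≤ B
  lipschitz : ∃ L : NNReal, LipschitzWith L K
  pos_at_zero : 0 < K 0
  bar_bounded : ∃ B, ∀ x, |x * K x| ≤ B
  bar_lipschitz : ∃ L : NNReal, LipschitzWith L (fun x => x * K x)
  bar_integrable : Integrable (fun x => x * K x)

/-- The scaled kernel `K_δ(x) = (1/δ) K(x/δ)`. -/
noncomputable def scaledKernel (K : ℝ → ℝ) (δ : ℝ) (x : ℝ) : ℝ := (1 / δ) * K (x / δ)

/-- The integrated kernel `K̃(x) = ∫_{-∞}^x K`. -/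
noncomputable def intKernel (K : ℝ → ℝ) (x : ℝ) : ℝ := ∫ y in Set.Iic x, K y

/-- The convolution-type smoothed loss `l_δ(x) = ∫ |y| K_δ(x - y) dy`. -/
noncomputable def smoothedLoss (K : ℝ → ℝ) (δ : ℝ) (x : ℝ) : ℝ :=
  ∫ y, |y| * scaledKernel K δ (x - y)

section Aux

variable {K : ℝ → ℝ}

lemma IsGoodKernel.continuous (hK : IsGoodKernel K) : Continuous K :=
  hK.lipschitz.choose_spec.continuous

lemma IsGoodKernel.integrable (hK : IsGoodKernel K) : Integrable K := by
  by_contra h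
  have := hK.integral_one
  rw [integral_undef h] at this
  norm_num at this

lemma IsGoodKernel.absBar_integrable (hK : IsGoodKernel K) :
    Integrable (fun u => |u| * K u) := by
  have h := hK.bar_integrable.abs
  refine h.congr (Filter.Eventually.of_forall fun u => ?_)
  show |u * K u| = |u| * K u
  rw [abs_mul, abs_of_nonneg (hK.nonneg u)]

/-- Change of variables: `smoothedLoss K δ x = ∫ u, |x - δ u| K u`. -/
lemma smoothedLoss_eq (hK : IsGoodKernel K) {δ : ℝ} (hδ : 0 < δ) (x : ℝ) :
    smoothedLoss K δ x = ∫ u, |x - δ * u| * K u := by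
  unfold smoothedLoss scaledKernel
  have h1 : (∫ y, |y| * ((1 / δ) * K ((x - y) / δ)))
      = ∫ z, |x - z| * ((1 / δ) * K (z / δ)) := by
    have := integral_sub_left_eq_self
      (fun z => |x - z| * ((1 / δ) * K (z / δ))) (volume : Measure ℝ) x
    simpa using this
  rw [h1]
  have h2 := Measure.integral_comp_mul_left
    (fun z => |x - z| * ((1 / δ) * K (z / δ))) δ
  simp only [mul_div_cancel_left₀ _ hδ.ne', abs_of_pos (inv_pos.mpr hδ),
    smul_eq_mul] at h2
  have h3 : (∫ u : ℝ, |x - δ * u| * (1 / δ * K u))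
      = (1 / δ) * ∫ u, |x - δ * u| * K u := by
    rw [← integral_const_mul]
    refine integral_congr_ae (Filter.Eventually.of_forall fun u => ?_)
    ring
  rw [h3] at h2
  have hne : (1 : ℝ) / δ ≠ 0 := by positivity
  rw [show (δ : ℝ)⁻¹ = 1 / δ from (one_div δ).symm] at h2
  exact (mul_left_cancel₀ hne h2).symm

end Aux

/-- the smoothed loss dominates the absolute value, with gap at most
`δ ∫ |u| K(u) du`. -/
theorem smoothedLoss_sub_abs_bounds
    (K : ℝ → ℝ) (hK : IsGoodKernel K) (δ : ℝ) (hδ : 0 < δ) :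
    ∀ x : ℝ, 0 ≤ smoothedLoss K δ x - |x| ∧
      smoothedLoss K δ x - |x| ≤ δ * ∫ u, |u| * K u := by
  intro x
  have hKc : Continuous K := hK.continuous
  have hKint : Integrable K := hK.integrable
  have hbar : Integrable (fun u => |u| * K u) := hK.absBar_integrable
  -- integrability of the main integrands
  have hf1 : Integrable (fun u => |x - δ * u| * K u) := by
    refine Integrable.mono' ((hKint.const_mul |x|).add (hbar.const_mul δ))
      ((continuous_const.sub (continuous_const.mul continuous_id)).abs.mul hKc).aestronglyMeasurable
      (Filter.Eventually.of_forall fun u => ?_)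
    simp only [Pi.add_apply, Real.norm_eq_abs,
      abs_of_nonneg (mul_nonneg (abs_nonneg _) (hK.nonneg u))]
    have : |x - δ * u| ≤ |x| + δ * |u| := by
      calc |x - δ * u| ≤ |x| + |δ * u| := abs_sub _ _
        _ = |x| + δ * |u| := by rw [abs_mul, abs_of_pos hδ]
    calc |x - δ * u| * K u ≤ (|x| + δ * |u|) * K u :=
          mul_le_mul_of_nonneg_right this (hK.nonneg u)
      _ = |x| * K u + δ * (|u| * K u) := by ring
  have hf2 : Integrable (fun u => |x + δ * u| * K u) := by
    have := hf1.comp_neg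
    refine this.congr (Filter.Eventually.of_forall fun u => ?_)
    simp only
    rw [mul_neg, sub_neg_eq_add, ← hK.symm u]
  -- symmetry: the two integrals coincide
  have hsymm : (∫ u, |x + δ * u| * K u) = ∫ u, |x - δ * u| * K u := by
    have := integral_neg_eq_self (fun u => |x - δ * u| * K u)
    rw [← this]
    refine integral_congr_ae (Filter.Eventually.of_forall fun u => ?_)
    simp only
    rw [mul_neg, sub_neg_eq_add, ← hK.symm u]
  have hx : |x| = ∫ u, |x| * K u := by
    rw [integral_const_mul, hK.integral_one, mul_one]
  rw [smoothedLoss_eq hK hδ]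
  constructor
  · -- lower bound
    have key : (2 : ℝ) * |x| ≤ 2 * ∫ u, |x - δ * u| * K u := by
      have h2I : (2 : ℝ) * ∫ u, |x - δ * u| * K u
          = ∫ u, (|x - δ * u| * K u + |x + δ * u| * K u) := by
        rw [integral_add hf1 hf2, hsymm]; ring
      rw [h2I]
      have h2x : (2 : ℝ) * |x| = ∫ u, 2 * (|x| * K u) := by
        rw [integral_const_mul, ← hx]
      rw [h2x]
      refine integral_mono ((hKint.const_mul |x|).const_mul 2) (hf1.add hf2)
        fun u => ?_
      simp only
      have htri : 2 * |x| ≤ |x - δ * u| + |x + δ * u| := by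
        have := abs_add_le (x - δ * u) (x + δ * u)
        have h2 : |x - δ * u + (x + δ * u)| = 2 * |x| := by
          rw [show x - δ * u + (x + δ * u) = 2 * x by ring, abs_mul]
          norm_num
        linarith
      nlinarith [hK.nonneg u, abs_nonneg (x - δ * u), abs_nonneg (x + δ * u)]
    linarith
  · -- upper bound
    have hub : (∫ u, |x - δ * u| * K u) ≤ ∫ u, (|x| * K u + δ * (|u| * K u)) := by
      refine integral_mono hf1 ((hKint.const_mul |x|).add (hbar.const_mul δ))
        fun u => ?_
      simp only
      have : |x - δ * u| ≤ |x| + δ * |u| := by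
        calc |x - δ * u| ≤ |x| + |δ * u| := abs_sub _ _
          _ = |x| + δ * |u| := by rw [abs_mul, abs_of_pos hδ]
      nlinarith [hK.nonneg u]
    rw [integral_add (hKint.const_mul |x|) (hbar.const_mul δ), integral_const_mul,
      integral_const_mul, hK.integral_one] at hub
    linarith
end

section
/- (Monotonicity along rays) Let K satisfy the kernel assumption, δ > 0, let a_1, …, a_n ∈ ℝ^p be fixed vectors and b_1, …, b_n ≥ 0 fixed scalars, and let x_0 ∈ ℝ^p with ‖x_0‖₂ > 0. Then the function h_n(u) = (1/u²) · (1/n) Σ_{i=1}^n U_1(u·x_0; a_i, b_i) = (1/n) Σ_{i=1}^n 2 (a_iᵀx_0)² l'_δ( u² (a_iᵀx_0)² − b_i ) is monotone increasing (nondecreasing) on (0, +∞). -/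
open MeasureTheory ProbabilityTheory
open scoped BigOperators RealInnerProductSpace Gradient

/-- The smoothed empirical objective
`F_δ(x) = (1/n) ∑ᵢ l_δ((aᵢᵀ x)² - bᵢ)`. -/
noncomputable def smoothedObj {p n : ℕ} (K : ℝ → ℝ) (δ : ℝ)
    (a : Fin n → EuclideanSpace ℝ (Fin p)) (b : Fin n → ℝ)
    (x : EuclideanSpace ℝ (Fin p)) : ℝ :=
  (n : ℝ)⁻¹ * ∑ i, smoothedLoss K δ ((⟪a i, x⟫) ^ 2 - b i)

/-- `Δ(x) = min(‖x - x⋆‖, ‖x + x⋆‖)`, the distance to the pair of true signals. -/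
noncomputable def distSig {p : ℕ} (xs x : EuclideanSpace ℝ (Fin p)) : ℝ :=
  min ‖x - xs‖ ‖x + xs‖

/-- The standard Gaussian measure `N(0, I_p)` on `EuclideanSpace ℝ (Fin p)`. -/
noncomputable def stdGaussian (p : ℕ) : Measure (EuclideanSpace ℝ (Fin p)) :=
  Measure.map (MeasurableEquiv.toLp 2 (Fin p → ℝ))
    (Measure.pi fun _ => gaussianReal 0 1)

/-- `a` is a family of i.i.d. standard Gaussian random vectors in `ℝ^p`. -/
def IsIIDStdGaussian {Ω : Type*} [MeasurableSpace Ω] (P : Measure Ω) {p : ℕ} {ι : Type*}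
    (a : ι → Ω → EuclideanSpace ℝ (Fin p)) : Prop :=
  (∀ i, Measurable (a i)) ∧
  iIndepFun a P ∧
  (∀ i, Measure.map (a i) P = stdGaussian p)


/-- `U₁(x; a, b) = 2 (aᵀx)² l'_δ((aᵀx)² - b)`. -/
noncomputable def U1 {p : ℕ} (K : ℝ → ℝ) (δ : ℝ)
    (x a : EuclideanSpace ℝ (Fin p)) (b : ℝ) : ℝ :=
  2 * (⟪a, x⟫) ^ 2 * deriv (smoothedLoss K δ) ((⟪a, x⟫) ^ 2 - b)

/-- `U₂(x; a, b) = (aᵀx⋆)² (2 l'_δ((aᵀx)² - b) + 4 (aᵀx)² l''_δ((aᵀx)² - b))`. -/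
noncomputable def U2 {p : ℕ} (K : ℝ → ℝ) (δ : ℝ) (xs : EuclideanSpace ℝ (Fin p))
    (x a : EuclideanSpace ℝ (Fin p)) (b : ℝ) : ℝ :=
  (⟪a, xs⟫) ^ 2 * (2 * deriv (smoothedLoss K δ) ((⟪a, x⟫) ^ 2 - b) +
    4 * (⟪a, x⟫) ^ 2 * deriv (deriv (smoothedLoss K δ)) ((⟪a, x⟫) ^ 2 - b))

/-- `U₃(x; a, b) = 2 (aᵀx⋆)(aᵀx) l'_δ((aᵀx)² - b)`. -/
noncomputable def U3 {p : ℕ} (K : ℝ → ℝ) (δ : ℝ) (xs : EuclideanSpace ℝ (Fin p))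
    (x a : EuclideanSpace ℝ (Fin p)) (b : ℝ) : ℝ :=
  2 * ⟪a, xs⟫ * ⟪a, x⟫ * deriv (smoothedLoss K δ) ((⟪a, x⟫) ^ 2 - b)

/-!
Writing `l_δ(x) = ∫ |x - z| K_δ(z) dz`, differentiation under the integral sign (the integrand is
`K_δ(z)`-Lipschitz in `x` and differentiable off `z = x`) gives `l_δ'(x) = ∫ sign(x - z) K_δ(z) dz`,
which is nondecreasing in `x` because `K_δ ≥ 0`: `l_δ` is a differentiable convex function.
Since `u ↦ u² t - b` is increasing on `(0, ∞)` for `t ≥ 0`, every summand of `h_n` is nondecreasing.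
The identity with `U₁` is the homogeneity `⟪a, u x₀⟫² = u² ⟪a, x₀⟫²`.
-/

section AbsConvolution

variable {κ : ℝ → ℝ}

lemma monotone_signType_sign_real : Monotone fun x : ℝ => (SignType.sign x : ℝ) := by
  intro x y hxy
  rcases lt_trichotomy x 0 with hx | hx | hx <;> rcases lt_trichotomy y 0 with hy | hy | hy <;>
    simp [hx, hy] <;> linarith

lemma integrable_abs_sub_mul (hκ : Integrable κ) (hκ₁ : Integrable fun z => |z| * κ z) (x : ℝ) :
    Integrable fun z => |x - z| * κ z := by
  refine ((hκ.abs.const_mul |x|).add hκ₁.abs).mono'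
    ((continuous_const.sub continuous_id).abs.aestronglyMeasurable.mul hκ.aestronglyMeasurable)
    (Filter.Eventually.of_forall fun z => ?_)
  simp only [Pi.add_apply, Real.norm_eq_abs, abs_mul, abs_abs]
  nlinarith [abs_sub x z, abs_nonneg (κ z)]

lemma integrable_signType_sign_sub_mul (hκ : Integrable κ) (x : ℝ) :
    Integrable fun z => (SignType.sign (x - z) : ℝ) * κ z :=
  hκ.bdd_mul (c := 1)
    (monotone_signType_sign_real.measurable.comp
      (measurable_const.sub measurable_id)).aestronglyMeasurable
    (Filter.Eventually.of_forall fun z => by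
      rcases lt_trichotomy (x - z) 0 with h | h | h <;> simp [h])

lemma hasDerivAt_integral_abs_sub_mul (hκ : Integrable κ) (hκ₁ : Integrable fun z => |z| * κ z)
    (x₀ : ℝ) :
    HasDerivAt (fun x => ∫ z, |x - z| * κ z) (∫ z, (SignType.sign (x₀ - z) : ℝ) * κ z) x₀ := by
  refine (hasDerivAt_integral_of_dominated_loc_of_lip (s := Set.univ) (bound := κ)
    Filter.univ_mem
    (Filter.Eventually.of_forall fun x => (integrable_abs_sub_mul hκ hκ₁ x).aestronglyMeasurable)
    (integrable_abs_sub_mul hκ hκ₁ x₀) (integrable_signType_sign_sub_mul hκ x₀).aestronglyMeasurable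
    (Filter.Eventually.of_forall fun z => ?_) hκ ?_).2
  · refine (LipschitzWith.of_dist_le_mul fun x y => ?_).lipschitzOnWith
    rw [Real.dist_eq, Real.dist_eq, ← sub_mul, abs_mul, Real.coe_nnabs, mul_comm]
    exact mul_le_mul_of_nonneg_left
      (by simpa using abs_abs_sub_abs_le_abs_sub (x - z) (y - z)) (abs_nonneg _)
  · filter_upwards [Measure.ae_ne volume x₀] with z hz
    simpa using ((hasDerivAt_abs (sub_ne_zero.2 hz.symm)).comp x₀
      ((hasDerivAt_id x₀).sub_const z)).mul_const (κ z)

theorem monotone_deriv_integral_abs_sub_mul (hκ₀ : ∀ z, 0 ≤ κ z) (hκ : Integrable κ)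
    (hκ₁ : Integrable fun z => |z| * κ z) :
    Monotone (deriv fun x => ∫ z, |x - z| * κ z) := by
  intro x y hxy
  rw [(hasDerivAt_integral_abs_sub_mul hκ hκ₁ x).deriv,
    (hasDerivAt_integral_abs_sub_mul hκ hκ₁ y).deriv]
  exact integral_mono (integrable_signType_sign_sub_mul hκ x)
    (integrable_signType_sign_sub_mul hκ y) fun z =>
      mul_le_mul_of_nonneg_right (monotone_signType_sign_real (sub_le_sub_right hxy z)) (hκ₀ z)

end AbsConvolution

section SmoothedLoss

variable {K : ℝ → ℝ} {δ : ℝ}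

lemma smoothedLoss_eq_integral_abs_sub_mul :
    smoothedLoss K δ = fun x => ∫ z, |x - z| * scaledKernel K δ z := by
  funext x
  rw [smoothedLoss, ← integral_sub_left_eq_self _ volume x]
  simp only [sub_sub_cancel]

lemma integrable_scaledKernel (hK : Integrable K) (hδ : δ ≠ 0) :
    Integrable (scaledKernel K δ) :=
  (hK.comp_div hδ).const_mul _

lemma integrable_abs_mul_scaledKernel (hK₀ : ∀ x, 0 ≤ K x)
    (hK₁ : Integrable fun x => x * K x) (hδ : 0 < δ) :
    Integrable fun z => |z| * scaledKernel K δ z := by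
  refine (hK₁.comp_div hδ.ne').abs.congr (Filter.Eventually.of_forall fun z => ?_)
  simp only [scaledKernel, abs_mul, abs_div, abs_of_pos hδ, abs_of_nonneg (hK₀ _)]
  ring

theorem IsGoodKernel.monotone_deriv_smoothedLoss (hK : IsGoodKernel K) (hδ : 0 < δ) :
    Monotone (deriv (smoothedLoss K δ)) := by
  have hK_int : Integrable K := by
    by_contra h
    simpa [integral_undef h] using hK.integral_one
  rw [smoothedLoss_eq_integral_abs_sub_mul]
  exact monotone_deriv_integral_abs_sub_mul (fun z => mul_nonneg (by positivity) (hK.nonneg _))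
    (integrable_scaledKernel hK_int hδ.ne')
    (integrable_abs_mul_scaledKernel hK.nonneg hK.bar_integrable hδ)

end SmoothedLoss

lemma U1_smul {p : ℕ} (K : ℝ → ℝ) (δ u : ℝ) (x a : EuclideanSpace ℝ (Fin p)) (b : ℝ) :
    U1 K δ (u • x) a b =
      u ^ 2 * (2 * (⟪a, x⟫) ^ 2 * deriv (smoothedLoss K δ) (u ^ 2 * (⟪a, x⟫) ^ 2 - b)) := by
  simp only [U1, real_inner_smul_right, mul_pow]
  ring

theorem U1_ray_monotone_general
    {p n : ℕ} (K : ℝ → ℝ) (hK : IsGoodKernel K) (δ : ℝ) (hδ : 0 < δ)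
    (a : Fin n → EuclideanSpace ℝ (Fin p)) (b : Fin n → ℝ)
    (x₀ : EuclideanSpace ℝ (Fin p)) :
    MonotoneOn (fun u : ℝ =>
      (n : ℝ)⁻¹ * ∑ i, 2 * (⟪a i, x₀⟫) ^ 2 *
        deriv (smoothedLoss K δ) (u ^ 2 * (⟪a i, x₀⟫) ^ 2 - b i)) (Set.Ioi 0) ∧
    ∀ u ∈ Set.Ioi (0 : ℝ),
      (n : ℝ)⁻¹ * ∑ i, 2 * (⟪a i, x₀⟫) ^ 2 *
          deriv (smoothedLoss K δ) (u ^ 2 * (⟪a i, x₀⟫) ^ 2 - b i) =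
        (u ^ 2)⁻¹ * ((n : ℝ)⁻¹ * ∑ i, U1 K δ (u • x₀) (a i) (b i)) := by
  refine ⟨fun u hu v _ huv => ?_, fun u hu => ?_⟩
  · have hu₀ : 0 ≤ u := le_of_lt hu
    dsimp only
    gcongr with i
    exact hK.monotone_deriv_smoothedLoss hδ (by gcongr)
  · simp only [U1_smul, ← Finset.mul_sum]
    rw [mul_left_comm _ (u ^ 2), inv_mul_cancel_left₀ (pow_ne_zero 2 (Set.mem_Ioi.1 hu).ne')]

/-- Monotonicity along rays. For fixed data, the function
`h_n(u) = (1/n) ∑ᵢ 2 (aᵢᵀx₀)² l'_δ(u² (aᵢᵀx₀)² - bᵢ)` is monotone nondecreasing on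
`(0, ∞)`; it equals `(1/u²) (1/n) ∑ᵢ U₁(u x₀; aᵢ, bᵢ)` there. -/
theorem U1_ray_monotone
    {p n : ℕ} (K : ℝ → ℝ) (hK : IsGoodKernel K) (δ : ℝ) (hδ : 0 < δ)
    (a : Fin n → EuclideanSpace ℝ (Fin p)) (b : Fin n → ℝ) (hb : ∀ i, 0 ≤ b i)
    (x₀ : EuclideanSpace ℝ (Fin p)) (hx₀ : 0 < ‖x₀‖) :
    MonotoneOn (fun u : ℝ =>
      (n : ℝ)⁻¹ * ∑ i, 2 * (⟪a i, x₀⟫) ^ 2 *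
        deriv (smoothedLoss K δ) (u ^ 2 * (⟪a i, x₀⟫) ^ 2 - b i)) (Set.Ioi 0) ∧
    ∀ u ∈ Set.Ioi (0 : ℝ),
      (n : ℝ)⁻¹ * ∑ i, 2 * (⟪a i, x₀⟫) ^ 2 *
          deriv (smoothedLoss K δ) (u ^ 2 * (⟪a i, x₀⟫) ^ 2 - b i) =
        (u ^ 2)⁻¹ * ((n : ℝ)⁻¹ * ∑ i, U1 K δ (u • x₀) (a i) (b i)) :=
  U1_ray_monotone_general K hK δ hδ a b x₀
end
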